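/- Let k be a field and F : C → D a k-linear functor between small k-linear categories. Suppose 0 → M → D C(x1,-) → D C(x2,-) is an exact sequence in Mod C. Then applying F^! yields an exact sequence 0 → F^!(M) → F^!(D C(x1,-)) → F^!(D C(x2,-)) in Mod D; in particular, F^!(M) is isomorphic to the kernel of a morphism D D(F(x1),-) → D D(F(x2),-) between duals of corepresentable D-modules. -/

import Mathlib

open CategoryTheory CategoryTheory.Limits Opposite

/-- The opposite of a `k`-linear category is `k`-linear. -/
noncomputable instance oppositeLinear (k : Type) [Field k] (C : Type) [SmallCategory C]
    [Preadditive C] [Linear k C] : Linear k Cᵒᵖ where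
  homModule X Y := Equiv.module k (opEquiv X Y)
  smul_comp _ _ _ _ _ _ := Quiver.Hom.unop_inj (Linear.comp_smul _ _ _ _ _ _)
  comp_smul _ _ _ _ _ _ := Quiver.Hom.unop_inj (Linear.smul_comp _ _ _ _ _ _)

variable (k : Type) [Field k]

/-- The `C`-module `D C(x,-) : y ↦ Hom_k(C(x,y), k)`. -/
noncomputable def DCoyo (C : Type) [SmallCategory C] [Preadditive C] [Linear k C] (x : C) :
    Cᵒᵖ ⥤ ModuleCat.{0} k where
  obj y := ModuleCat.of k (Module.Dual k (x ⟶ y.unop))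
  map {y y'} f := ModuleCat.ofHom <| LinearMap.dualMap (Linear.rightComp k x f.unop)
  map_id y := by
    refine ModuleCat.hom_ext <| LinearMap.ext fun (φ : Module.Dual k (x ⟶ y.unop)) => LinearMap.ext fun g => ?_
    show φ (g ≫ 𝟙 y.unop) = φ g
    rw [Category.comp_id]
  map_comp {y y' y''} f g := by
    refine ModuleCat.hom_ext <| LinearMap.ext fun (φ : Module.Dual k (x ⟶ y.unop)) => LinearMap.ext fun h => ?_
    show φ (h ≫ (g.unop ≫ f.unop)) = φ ((h ≫ g.unop) ≫ f.unop)
    rw [Category.assoc]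

variable {C D : Type} [SmallCategory C] [SmallCategory D]
  [Preadditive C] [Preadditive D] [Linear k C] [Linear k D]

/-- The functor `F^! : Mod C ⥤ Mod D`, given by
`F^!(M)(y) = Hom_{Mod C}(Hom_D(F(-), y), M)`. -/
noncomputable def Fshriek (F : C ⥤ D) :
    (Cᵒᵖ ⥤ ModuleCat.{0} k) ⥤ (Dᵒᵖ ⥤ ModuleCat.{0} k) :=
  linearYoneda k (Cᵒᵖ ⥤ ModuleCat.{0} k) ⋙
    (Functor.whiskeringLeft Dᵒᵖ (Cᵒᵖ ⥤ ModuleCat.{0} k)ᵒᵖ (ModuleCat.{0} k)).obj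
      (linearYoneda k D ⋙ (Functor.whiskeringLeft Cᵒᵖ Dᵒᵖ (ModuleCat.{0} k)).obj F.op).op

/-!
`F^!` is `M ↦ Hom(-, M)` followed by precomposition with `y ↦ Hom_D(F(-), y)`; hom functors
and precomposition preserve limits, so `F^!` preserves kernels. The dual Yoneda lemma
`Hom(N, D C(x,-)) ≅ D (N x)`, for `N = Hom_D(F(-), y)`, identifies `F^!(D C(x,-))` with
`D D(F x,-)`.
-/

section
universe v u
variable {A : Type u} [Category.{v} A] [Preadditive A] [Linear k A]

instance preservesLimits_linearCoyoneda_obj (X : Aᵒᵖ) :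
    PreservesLimits ((linearCoyoneda k A).obj X) :=
  have : PreservesLimits ((linearCoyoneda k A).obj X ⋙ forget _) :=
    inferInstanceAs (PreservesLimits (coyoneda.obj X))
  preservesLimits_of_reflects_of_preserves _ (forget _)

instance preservesLimitsOfShape_linearYoneda (J : Type v) [SmallCategory J] :
    PreservesLimitsOfShape J (linearYoneda k A) :=
  preservesLimitsOfShape_of_evaluation _ _ fun X =>
    inferInstanceAs (PreservesLimitsOfShape J ((linearCoyoneda k A).obj X))

end

instance preservesLimitsOfShape_Fshriek (F : C ⥤ D) (J : Type) [SmallCategory J] :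
    PreservesLimitsOfShape J (Fshriek k F) := by
  unfold Fshriek
  infer_instance

instance Functor.op_linear (F : C ⥤ D) [F.Additive] [F.Linear k] : F.op.Linear k where
  map_smul f c := Quiver.Hom.unop_inj (F.map_smul c f.unop)

instance linearYoneda_obj_linear (y : D) : ((linearYoneda k D).obj y).Linear k where
  map_smul f c := by ext g; exact Linear.smul_comp _ _ _ _ _ _

noncomputable def homDCoyoEquiv (N : Cᵒᵖ ⥤ ModuleCat.{0} k) [N.Additive] [N.Linear k] (x : C) :
    (N ⟶ DCoyo k C x) ≃ₗ[k] Module.Dual k (N.obj (op x)) where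
  toFun η := Module.Dual.eval k (x ⟶ x) (𝟙 x) ∘ₗ (η.app (op x)).hom
  map_add' _ _ := rfl
  map_smul' _ _ := rfl
  invFun φ :=
    { app z := ModuleCat.ofHom <| LinearMap.mk₂ k (fun n (u : x ⟶ z.unop) => φ (N.map u.op n))
        (fun n n' u => by simp)
        (fun c n u => by simp)
        (fun n u u' => by simp [N.map_add])
        (fun c n u => by
          change φ (N.map (c • u.op) n) = c • φ (N.map u.op n)
          simp [N.map_smul])
      naturality z z' v := by
        ext n : 2
        refine LinearMap.ext fun u => ?_
        change φ (N.map u.op (N.map v n)) = φ (N.map (v ≫ u.op) n)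
        simp }
  left_inv η := by
    ext z n
    refine LinearMap.ext fun u => ?_
    change (show Module.Dual k (x ⟶ x) from η.app (op x) (N.map u.op n)) (𝟙 x) =
      (show Module.Dual k (x ⟶ z.unop) from η.app z n) u
    rw [NatTrans.naturality_apply]
    change (show Module.Dual k (x ⟶ z.unop) from η.app z n) (𝟙 x ≫ u) = _
    rw [Category.id_comp]
  right_inv φ := by
    ext n
    change φ (N.map (𝟙 (op x)) n) = φ n
    simp

noncomputable def shriekDCoyoIso (F : C ⥤ D) [F.Additive] [F.Linear k] (x : C) :
    (Fshriek k F).obj (DCoyo k C x) ≅ DCoyo k D (F.obj x) :=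
  NatIso.ofComponents
    (fun y => (homDCoyoEquiv k (F.op ⋙ (linearYoneda k D).obj y.unop) x).toModuleIso)
    (fun _ => rfl)

/-- Applying `F^!` to an exact sequence `0 ⟶ M ⟶ D C(x₁,-) ⟶ D C(x₂,-)` yields an exact
sequence `0 ⟶ F^!(M) ⟶ F^!(D C(x₁,-)) ⟶ F^!(D C(x₂,-))`; in particular `F^!(M)` is
isomorphic to the kernel of a morphism `D D(F(x₁),-) ⟶ D D(F(x₂),-)`. -/
theorem shriek_left_exact (F : C ⥤ D) [F.Additive] [F.Linear k]
    (M : Cᵒᵖ ⥤ ModuleCat.{0} k) (x₁ x₂ : C)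
    (α : M ⟶ DCoyo k C x₁) (β : DCoyo k C x₁ ⟶ DCoyo k C x₂)
    [Mono α] (w : α ≫ β = 0) (hex : (ShortComplex.mk α β w).Exact) :
    Mono ((Fshriek k F).map α) ∧
    (∃ w' : (Fshriek k F).map α ≫ (Fshriek k F).map β = 0,
      (ShortComplex.mk ((Fshriek k F).map α) ((Fshriek k F).map β) w').Exact) ∧
    (∃ g : DCoyo k D (F.obj x₁) ⟶ DCoyo k D (F.obj x₂),
      Nonempty ((Fshriek k F).obj M ≅ kernel g)) := by
  have hker := KernelFork.mapIsLimit _ hex.fIsKernel (Fshriek k F)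
  refine ⟨mono_of_isLimit_fork hker, ⟨_, hex.map_of_mono_of_preservesKernel _ ‹_› inferInstance⟩,
    (shriekDCoyoIso k F x₁).inv ≫ (Fshriek k F).map β ≫ (shriekDCoyoIso k F x₂).hom, ⟨?_⟩⟩
  exact hker.conePointUniqueUpToIso (kernelIsKernel _) ≪≫
    (kernelCompMono _ (shriekDCoyoIso k F x₂).hom).symm ≪≫
    (kernelIsIsoComp (shriekDCoyoIso k F x₁).inv _).symm
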